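/- Let Σ be a finite alphabet with |Σ| ≥ 2. Then for every z ∈ {h, p, r, c, rc}, the class 𝓛_{Σ,z} is closed neither under row concatenation closure nor under column concatenation closure: there exist array patterns α and α' such that (L_{Σ,z}(α))^{⊖*} ≠ L_{Σ,z}(γ) for every array pattern γ, and (L_{Σ,z}(α'))^{⦶*} ≠ L_{Σ,z}(γ) for every array pattern γ. -/

import Mathlib

/-- A nonempty rectangular two-dimensional word (array) over `σ`. -/
structure Arr (σ : Type) : Type where
  rows : ℕ
  cols : ℕ
  rows_pos : 0 < rows
  cols_pos : 0 < cols
  entry : Fin rows → Fin cols → σ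

namespace Arr

variable {σ γ : Type}

/-- Column concatenation: place `V` to the right of `U`; `none` if heights differ. -/
def colCat (U V : Arr σ) : Option (Arr σ) :=
  if h : U.rows = V.rows then
    some { rows := U.rows
           cols := U.cols + V.cols
           rows_pos := U.rows_pos
           cols_pos := by have := U.cols_pos; omega
           entry := fun i j =>
             if hj : (j : ℕ) < U.cols then U.entry i ⟨j, hj⟩
             else V.entry (Fin.cast h i) ⟨(j : ℕ) - U.cols, by have := j.isLt; omega⟩ }
  else none

/-- Row concatenation: place `V` below `U`; `none` if widths differ. -/
def rowCat (U V : Arr σ) : Option (Arr σ) :=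
  if h : U.cols = V.cols then
    some { rows := U.rows + V.rows
           cols := U.cols
           rows_pos := by have := U.rows_pos; omega
           cols_pos := U.cols_pos
           entry := fun i j =>
             if hi : (i : ℕ) < U.rows then U.entry ⟨i, hi⟩ j
             else V.entry ⟨(i : ℕ) - U.rows, by have := i.isLt; omega⟩ (Fin.cast h j) }
  else none

/-- A two-dimensional morphism: compatible with both concatenations,
with "both sides undefined" counting as equal. -/
def IsMorphism (h : Arr σ → Arr γ) : Prop :=
  (∀ V W : Arr σ, Option.map h (colCat V W) = colCat (h V) (h W)) ∧
  (∀ V W : Arr σ, Option.map h (rowCat V W) = rowCat (h V) (h W))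

/-- Concatenate a nonempty list of (possibly undefined) arrays with the
given partial concatenation operation; `none` on the empty list. -/
def catListO (op : Arr σ → Arr σ → Option (Arr σ)) : List (Option (Arr σ)) → Option (Arr σ)
  | [] => none
  | [a] => a
  | a :: b :: rest => a.bind fun x => (catListO op (b :: rest)).bind fun y => op x y

/-- `g_{⦶,⊖}`: substitute and assemble, first column-concatenating each row,
then row-concatenating the rows. -/
def subCR {X : Type} (g : X → Arr σ) (α : Arr X) : Option (Arr σ) :=
  catListO rowCat (List.ofFn fun i : Fin α.rows =>
    catListO colCat (List.ofFn fun j : Fin α.cols => some (g (α.entry i j))))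

/-- `g_{⊖,⦶}`: substitute and assemble, first row-concatenating each column,
then column-concatenating the columns. -/
def subRC {X : Type} (g : X → Arr σ) (α : Arr X) : Option (Arr σ) :=
  catListO colCat (List.ofFn fun j : Fin α.cols =>
    catListO rowCat (List.ofFn fun i : Fin α.rows => some (g (α.entry i j))))

/-- A substitution is uniform if all images have the same dimensions. -/
def Uniform {X : Type} (g : X → Arr σ) : Prop :=
  ∃ m n : ℕ, ∀ x : X, (g x).rows = m ∧ (g x).cols = n

end Arr

open Arr

/-- The five modes of array pattern languages. -/
inductive Mode | h | p | r | c | rc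
deriving DecidableEq

/-- The array pattern language of an array pattern (an array over the
variables `ℕ`) in each mode. -/
def langOf (σ : Type) : Mode → Arr ℕ → Set (Arr σ)
  | Mode.h, α => {W | ∃ g : Arr ℕ → Arr σ, IsMorphism g ∧ g α = W}
  | Mode.p, α => {W | ∃ s : ℕ → Arr σ, subCR s α = some W ∧ subRC s α = some W}
  | Mode.r, α => {W | ∃ s : ℕ → Arr σ, subCR s α = some W}
  | Mode.c, α => {W | ∃ s : ℕ → Arr σ, subRC s α = some W}
  | Mode.rc, α =>
      {W | ∃ s : ℕ → Arr σ, subCR s α = some W} ∪ {W | ∃ s : ℕ → Arr σ, subRC s α = some W}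

/-- The row concatenation closure of an array language. -/
def rowStar {σ : Type} (L : Set (Arr σ)) : Set (Arr σ) :=
  {W | ∃ l : List (Arr σ), l ≠ [] ∧ (∀ U ∈ l, U ∈ L) ∧
        catListO rowCat (l.map some) = some W}

/-- The column concatenation closure of an array language. -/
def colStar {σ : Type} (L : Set (Arr σ)) : Set (Arr σ) :=
  {W | ∃ l : List (Arr σ), l ≠ [] ∧ (∀ U ∈ l, U ∈ L) ∧
        catListO colCat (l.map some) = some W}

/-!
Take α = x ⊖ x (`col2 0 0`); every image of α has the form U ⊖ U. Suppose the row closure of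
L(α) were L(γ). Constant arrays lie in every pattern language, and comparing their heights with
those of the members of the closure (which are at least 2, and at least 4 for products of two
or more factors) forces γ to be a 2×1 pattern y ⊖ w. If y = w, every image of γ has the form
U ⊖ U, but the column a a b b of the closure does not. If y ≠ w, the column a b is an image of
γ; having height 2 it would be an image of α, hence of the form U ⊖ U. Transposition exchanges
the two closures and the modes r and c (fixing h, p and rc), so α' = αᵀ handles the column
closure.
-/

namespace Arr

variable {σ τ X : Type}

theorem ext' {A B : Arr σ} (hr : A.rows = B.rows) (hc : A.cols = B.cols)
    (he : ∀ i j, A.entry i j = B.entry (Fin.cast hr i) (Fin.cast hc j)) : A = B := by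
  obtain ⟨r, c, _, _, e⟩ := A
  obtain ⟨r', c', _, _, e'⟩ := B
  dsimp only at hr hc he
  subst hr hc
  simp only [mk.injEq, heq_eq_eq, true_and]
  funext i j
  exact he i j

theorem entry_eq_of_eq {A B : Arr σ} (h : A = B) (i : Fin A.rows) (j : Fin A.cols) :
    A.entry i j = B.entry (Fin.cast (congrArg rows h) i) (Fin.cast (congrArg cols h) j) := by
  subst h
  rfl

theorem rowCat_dims {U V W : Arr σ} (h : rowCat U V = some W) :
    W.rows = U.rows + V.rows ∧ U.cols = W.cols ∧ V.cols = W.cols := by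
  unfold rowCat at h
  split at h
  · cases h
    rename_i h
    exact ⟨rfl, rfl, h.symm⟩
  · cases h

theorem rowCat_entry_top {U V W : Arr σ} (h : rowCat U V = some W) (i : Fin U.rows)
    (j : Fin U.cols) :
    W.entry ⟨i, by have := (rowCat_dims h).1; omega⟩ ⟨j, (rowCat_dims h).2.1 ▸ j.isLt⟩ =
      U.entry i j := by
  unfold rowCat at h
  split at h
  · cases h
    exact dif_pos i.isLt
  · cases h

theorem rowCat_entry_bottom {U V W : Arr σ} (h : rowCat U V = some W) (i : Fin V.rows)
    (j : Fin V.cols) :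
    W.entry ⟨U.rows + i, by have := (rowCat_dims h).1; omega⟩ ⟨j, (rowCat_dims h).2.2 ▸ j.isLt⟩ =
      V.entry i j := by
  unfold rowCat at h
  split at h
  · cases h
    refine (dif_neg (by simp)).trans ?_
    congr 1
    simp
  · cases h

theorem rowCat_inj {A B A' B' W : Arr σ} (h : rowCat A B = some W) (h' : rowCat A' B' = some W)
    (hr : A.rows = A'.rows) : A = A' ∧ B = B' := by
  obtain ⟨hW, hAc, hBc⟩ := rowCat_dims h
  obtain ⟨hW', hAc', hBc'⟩ := rowCat_dims h'
  constructor
  · refine ext' hr (hAc.trans hAc'.symm) fun i j => ?_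
    exact (rowCat_entry_top h i j).symm.trans (rowCat_entry_top h' (Fin.cast hr i) (Fin.cast _ j))
  · refine ext' (by omega) (hBc.trans hBc'.symm) fun i j => ?_
    rw [← rowCat_entry_bottom h i j, ← rowCat_entry_bottom h' (Fin.cast _ i) (Fin.cast _ j)]
    congr 1
    simp [hr]

theorem exists_rowCat_eq_some_of_rows_eq_add (A : Arr σ) {p q : ℕ} (hp : 0 < p) (hq : 0 < q)
    (hpq : A.rows = p + q) : ∃ B C : Arr σ, B.rows = p ∧ rowCat B C = some A := by
  refine ⟨⟨p, A.cols, hp, A.cols_pos, fun i j => A.entry ⟨i, by omega⟩ j⟩,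
    ⟨q, A.cols, hq, A.cols_pos, fun i j => A.entry ⟨p + i, by omega⟩ j⟩, rfl, ?_⟩
  unfold rowCat
  rw [dif_pos rfl, Option.some.injEq]
  refine ext' hpq.symm rfl fun i j => ?_
  dsimp only
  split
  · rfl
  · congr
    omega

def transpose (A : Arr σ) : Arr σ :=
  ⟨A.cols, A.rows, A.cols_pos, A.rows_pos, fun i j => A.entry j i⟩

postfix:max "ᵀ" => transpose

@[simp]
theorem transpose_transpose (A : Arr σ) : Aᵀᵀ = A := rfl

theorem transpose_involutive : Function.Involutive (transpose : Arr σ → Arr σ) :=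
  transpose_transpose

theorem rowCat_transpose (U V : Arr σ) : rowCat Uᵀ Vᵀ = (colCat U V).map transpose := by
  unfold rowCat colCat
  by_cases h : U.rows = V.rows
  · rw [dif_pos (show Uᵀ.cols = Vᵀ.cols from h), dif_pos h, Option.map_some,
      Option.some.injEq]
    exact ext' rfl rfl fun i j => rfl
  · rw [dif_neg (show ¬Uᵀ.cols = Vᵀ.cols from h), dif_neg h, Option.map_none]

theorem colCat_transpose (U V : Arr σ) : colCat Uᵀ Vᵀ = (rowCat U V).map transpose := by
  rw [show rowCat U V = rowCat Uᵀᵀ Vᵀᵀ from rfl, rowCat_transpose, Option.map_map,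
    transpose_involutive.comp_self, Option.map_id, id]

theorem colCat_dims {U V W : Arr σ} (h : colCat U V = some W) :
    W.cols = U.cols + V.cols ∧ U.rows = W.rows ∧ V.rows = W.rows :=
  rowCat_dims (show rowCat Uᵀ Vᵀ = some Wᵀ by rw [rowCat_transpose, h]; rfl)

theorem catListO_cons (op : Arr σ → Arr σ → Option (Arr σ)) (x : Option (Arr σ))
    {L : List (Option (Arr σ))} (hL : L ≠ []) :
    catListO op (x :: L) = x.bind fun a => (catListO op L).bind fun b => op a b := by
  cases L with
  | nil => exact absurd rfl hL
  | cons y t => rfl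

theorem catListO_map {op : Arr σ → Arr σ → Option (Arr σ)}
    {op' : Arr τ → Arr τ → Option (Arr τ)} {f : Arr σ → Arr τ}
    (hf : ∀ x y, op' (f x) (f y) = (op x y).map f) (L : List (Option (Arr σ))) :
    catListO op' (L.map (Option.map f)) = (catListO op L).map f := by
  induction L with
  | nil => rfl
  | cons a t ih =>
    cases t with
    | nil => rfl
    | cons b r =>
      simp only [List.map_cons, catListO] at ih ⊢
      rw [ih]
      cases a <;> cases catListO op (b :: r) <;> simp [hf]

theorem catListO_eq_some {op : Arr σ → Arr σ → Option (Arr σ)} {d e : Arr σ → ℕ}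
    (hop : ∀ {x y w}, op x y = some w → d w = d x + d y ∧ e x = e w ∧ e y = e w)
    {L : List (Option (Arr σ))} {W : Arr σ} (h : catListO op L = some W) :
    ∃ l : List (Arr σ), L = l.map some ∧ d W = (l.map d).sum ∧ ∀ U ∈ l, e U = e W := by
  induction L generalizing W with
  | nil => cases h
  | cons a t ih =>
    cases t with
    | nil => exact ⟨[W], by simpa [catListO] using h, by simp, by simp⟩
    | cons b r =>
      simp only [catListO, Option.bind_eq_some_iff] at h
      obtain ⟨U, rfl, Y, hY, hUY⟩ := h
      obtain ⟨l, hl, hd, he⟩ := ih hY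
      obtain ⟨hdW, heU, heY⟩ := hop hUY
      refine ⟨U :: l, by rw [hl]; rfl, by simp [hdW, hd], ?_⟩
      rintro V (_ | ⟨_, hV⟩)
      · exact heU
      · exact (he V hV).trans heY

theorem length_le_sum_map (l : List (Arr σ)) {d : Arr σ → ℕ} (hd : ∀ A, 0 < d A) :
    l.length ≤ (l.map d).sum := by
  simpa using List.length_le_sum_of_one_le (l.map d) fun _ hx => by
    obtain ⟨A, -, rfl⟩ := List.mem_map.mp hx
    exact hd A

theorem subRC_transpose (s : X → Arr σ) (γ : Arr X) :
    subRC (transpose ∘ s) γᵀ = (subCR s γ).map transpose := by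
  unfold subRC subCR
  simp only [← catListO_map colCat_transpose, ← catListO_map rowCat_transpose, List.map_ofFn,
    Function.comp_def, Option.map_some]
  rfl

theorem subCR_transpose (s : X → Arr σ) (γ : Arr X) :
    subCR (transpose ∘ s) γᵀ = (subRC s γ).map transpose := by
  have h := subRC_transpose (transpose ∘ s) γᵀ
  rw [← Function.comp_assoc, transpose_involutive.comp_self, Function.id_comp] at h
  rw [show subRC s γ = subRC s γᵀᵀ from rfl, h, Option.map_map,
    transpose_involutive.comp_self, Option.map_id, id]

theorem IsMorphism.transpose_comp_comp_transpose {g : Arr X → Arr σ} (hg : IsMorphism g) :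
    IsMorphism (transpose ∘ g ∘ transpose) := by
  constructor
  · intro V W
    rw [show colCat V W = colCat Vᵀᵀ Wᵀᵀ from rfl, colCat_transpose, Option.map_map,
      Function.comp_assoc, Function.comp_assoc, transpose_involutive.comp_self,
      Function.comp_id, ← Option.map_map, hg.2]
    exact (colCat_transpose _ _).symm
  · intro V W
    rw [show rowCat V W = rowCat Vᵀᵀ Wᵀᵀ from rfl, rowCat_transpose, Option.map_map,
      Function.comp_assoc, Function.comp_assoc, transpose_involutive.comp_self,
      Function.comp_id, ← Option.map_map, hg.1]
    exact (rowCat_transpose _ _).symm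

theorem subCR_dims {s : X → Arr σ} {γ : Arr X} {W : Arr σ} (h : subCR s γ = some W) :
    γ.rows ≤ W.rows ∧ γ.cols ≤ W.cols := by
  obtain ⟨l, hl, hrows, hcols⟩ := catListO_eq_some rowCat_dims h
  obtain ⟨U, hU, hU0⟩ := List.mem_map.mp (hl ▸ List.mem_ofFn.mpr ⟨⟨0, γ.rows_pos⟩, rfl⟩)
  obtain ⟨l', hl', hcols', -⟩ := catListO_eq_some colCat_dims hU0.symm
  constructor
  · have hlen : γ.rows = l.length := by simpa using congrArg List.length hl
    rw [hlen, hrows]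
    exact length_le_sum_map l Arr.rows_pos
  · have hlen : γ.cols = l'.length := by simpa using congrArg List.length hl'
    rw [← hcols U hU, hlen, hcols']
    exact length_le_sum_map l' Arr.cols_pos

theorem subRC_dims {s : X → Arr σ} {γ : Arr X} {W : Arr σ} (h : subRC s γ = some W) :
    γ.rows ≤ W.rows ∧ γ.cols ≤ W.cols :=
  (subCR_dims (show subCR (transpose ∘ s) γᵀ = some Wᵀ by rw [subCR_transpose, h]; rfl)).symm

theorem IsMorphism.rows_le {g : Arr X → Arr σ} (hg : IsMorphism g) (A : Arr X) :
    A.rows ≤ (g A).rows := by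
  induction hn : A.rows using Nat.strong_induction_on generalizing A with
  | _ n ih =>
    rcases Nat.lt_or_ge n 2 with hn2 | hn2
    · have := (g A).rows_pos
      omega
    · obtain ⟨B, C, hB, hBC⟩ :=
        exists_rowCat_eq_some_of_rows_eq_add A one_pos (by omega : 0 < n - 1) (by omega)
      have hgBC := hg.2 B C
      rw [hBC, Option.map_some] at hgBC
      have hC := (rowCat_dims hBC).1
      have := ih C.rows (by omega) C rfl
      have := (rowCat_dims hgBC.symm).1
      have := (g B).rows_pos
      omega

theorem IsMorphism.cols_le {g : Arr X → Arr σ} (hg : IsMorphism g) (A : Arr X) :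
    A.cols ≤ (g A).cols :=
  hg.transpose_comp_comp_transpose.rows_le Aᵀ

def unit (x : σ) : Arr σ := ⟨1, 1, one_pos, one_pos, fun _ _ => x⟩

def relabel (c : σ → τ) (A : Arr σ) : Arr τ :=
  ⟨A.rows, A.cols, A.rows_pos, A.cols_pos, fun i j => c (A.entry i j)⟩

theorem catListO_rowCat_ofFn {m n : ℕ} (hm : 0 < m) (hn : 0 < n) (f : Fin m → Fin n → σ) :
    catListO rowCat (List.ofFn fun i => some (⟨1, n, one_pos, hn, fun _ j => f i j⟩ : Arr σ)) =
      some ⟨m, n, hm, hn, f⟩ := by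
  induction m with
  | zero => omega
  | succ k ih =>
    rcases Nat.eq_zero_or_pos k with rfl | hk
    · simp only [List.ofFn_succ, List.ofFn_zero, catListO, Option.some.injEq]
      exact ext' rfl rfl fun i j => by rw [Subsingleton.elim i 0]; rfl
    · rw [List.ofFn_succ, catListO_cons _ _ (by simp [hk.ne']), ih hk]
      unfold rowCat
      rw [Option.bind_some, Option.bind_some, dif_pos rfl, Option.some.injEq]
      refine ext' (by simp only; omega) rfl fun i j => ?_
      dsimp only
      split
      · congr
        ext
        simp only [Fin.val_cast, Fin.val_zero]
        omega
      · congr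
        ext
        simp only [Fin.val_succ, Fin.val_cast]
        omega

theorem catListO_colCat_ofFn_unit {n : ℕ} (hn : 0 < n) (v : Fin n → σ) :
    catListO colCat (List.ofFn fun j => some (unit (v j))) =
      some ⟨1, n, one_pos, hn, fun _ j => v j⟩ := by
  have h := congrArg (Option.map transpose) (catListO_rowCat_ofFn hn one_pos fun j _ => v j)
  rw [← catListO_map colCat_transpose, List.map_ofFn] at h
  exact h

theorem subCR_unit_comp (c : X → σ) (γ : Arr X) :
    subCR (fun x => unit (c x)) γ = some (relabel c γ) := by
  unfold subCR
  simp only [catListO_colCat_ofFn_unit γ.cols_pos]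
  exact catListO_rowCat_ofFn γ.rows_pos γ.cols_pos _

theorem subRC_unit_comp (c : X → σ) (γ : Arr X) :
    subRC (fun x => unit (c x)) γ = some (relabel c γ) := by
  have h := subRC_transpose (fun x => unit (c x)) γᵀ
  rw [subCR_unit_comp] at h
  exact h

theorem rowCat_relabel (c : σ → τ) (U V : Arr σ) :
    rowCat (relabel c U) (relabel c V) = (rowCat U V).map (relabel c) := by
  unfold rowCat
  by_cases h : U.cols = V.cols
  · rw [dif_pos (show (relabel c U).cols = (relabel c V).cols from h), dif_pos h,
      Option.map_some, Option.some.injEq]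
    exact ext' rfl rfl fun i j => (apply_dite c _ _ _).symm
  · rw [dif_neg (show ¬(relabel c U).cols = (relabel c V).cols from h), dif_neg h,
      Option.map_none]

theorem colCat_relabel (c : σ → τ) (U V : Arr σ) :
    colCat (relabel c U) (relabel c V) = (colCat U V).map (relabel c) := by
  unfold colCat
  by_cases h : U.rows = V.rows
  · rw [dif_pos (show (relabel c U).rows = (relabel c V).rows from h), dif_pos h,
      Option.map_some, Option.some.injEq]
    exact ext' rfl rfl fun i j => (apply_dite c _ _ _).symm
  · rw [dif_neg (show ¬(relabel c U).rows = (relabel c V).rows from h), dif_neg h,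
      Option.map_none]

theorem isMorphism_relabel (c : σ → τ) : IsMorphism (relabel c) :=
  ⟨fun U V => (colCat_relabel c U V).symm, fun U V => (rowCat_relabel c U V).symm⟩

def col2 (y w : X) : Arr X := ⟨2, 1, two_pos, one_pos, fun i _ => ![y, w] i⟩

theorem rowCat_unit_unit (y w : X) : rowCat (unit y) (unit w) = some (col2 y w) := by
  unfold rowCat
  rw [dif_pos (show (unit y).cols = (unit w).cols from rfl), Option.some.injEq]
  refine ext' rfl rfl fun i j => ?_
  fin_cases i <;> rfl

theorem subCR_col2 (s : X → Arr σ) (y w : X) : subCR s (col2 y w) = rowCat (s y) (s w) := rfl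

theorem subRC_col2 (s : X → Arr σ) (y w : X) : subRC s (col2 y w) = rowCat (s y) (s w) := rfl

theorem exists_eq_col2 {γ : Arr X} (hr : γ.rows = 2) (hc : γ.cols = 1) :
    ∃ y w, γ = col2 y w := by
  obtain ⟨r, c, _, _, e⟩ := γ
  dsimp only at hr hc
  subst hr hc
  refine ⟨e 0 0, e 1 0, ext' rfl rfl fun i j => ?_⟩
  fin_cases i <;> fin_cases j <;> rfl

end Arr

def Mode.transpose : Mode → Mode
  | .h => .h
  | .p => .p
  | .r => .c
  | .c => .r
  | .rc => .rc

@[simp]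
theorem Mode.transpose_transpose (z : Mode) : z.transpose.transpose = z := by
  cases z <;> rfl

open Arr

section Languages

variable {σ : Type}

theorem transpose_mem_langOf_transpose {z : Mode} {γ : Arr ℕ} {W : Arr σ}
    (hW : W ∈ langOf σ z γ) : Wᵀ ∈ langOf σ z.transpose γᵀ := by
  cases z with
  | h =>
    obtain ⟨g, hg, rfl⟩ := hW
    exact ⟨_, hg.transpose_comp_comp_transpose, rfl⟩
  | p =>
    obtain ⟨s, hCR, hRC⟩ := hW
    exact ⟨transpose ∘ s, by rw [subCR_transpose, hRC]; rfl, by rw [subRC_transpose, hCR]; rfl⟩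
  | r =>
    obtain ⟨s, hCR⟩ := hW
    exact ⟨transpose ∘ s, by rw [subRC_transpose, hCR]; rfl⟩
  | c =>
    obtain ⟨s, hRC⟩ := hW
    exact ⟨transpose ∘ s, by rw [subCR_transpose, hRC]; rfl⟩
  | rc =>
    rcases hW with ⟨s, hCR⟩ | ⟨s, hRC⟩
    · exact Or.inr ⟨transpose ∘ s, by rw [subRC_transpose, hCR]; rfl⟩
    · exact Or.inl ⟨transpose ∘ s, by rw [subCR_transpose, hRC]; rfl⟩

theorem langOf_transpose (σ : Type) (z : Mode) (γ : Arr ℕ) :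
    langOf σ z γᵀ = transpose ⁻¹' langOf σ z.transpose γ := by
  ext W
  refine ⟨transpose_mem_langOf_transpose, fun hW => ?_⟩
  simpa using transpose_mem_langOf_transpose hW

theorem relabel_mem_langOf (z : Mode) (c : ℕ → σ) (γ : Arr ℕ) : relabel c γ ∈ langOf σ z γ := by
  cases z with
  | h => exact ⟨_, isMorphism_relabel c, rfl⟩
  | p => exact ⟨_, subCR_unit_comp c γ, subRC_unit_comp c γ⟩
  | r => exact ⟨_, subCR_unit_comp c γ⟩
  | c => exact ⟨_, subRC_unit_comp c γ⟩
  | rc => exact Or.inl ⟨_, subCR_unit_comp c γ⟩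

theorem langOf_dims {z : Mode} {γ : Arr ℕ} {W : Arr σ} (h : W ∈ langOf σ z γ) :
    γ.rows ≤ W.rows ∧ γ.cols ≤ W.cols := by
  cases z with
  | h =>
    obtain ⟨g, hg, rfl⟩ := h
    exact ⟨hg.rows_le γ, hg.cols_le γ⟩
  | p => exact subCR_dims h.choose_spec.1
  | r => exact subCR_dims h.choose_spec
  | c => exact subRC_dims h.choose_spec
  | rc => exact h.elim (fun h => subCR_dims h.choose_spec) fun h => subRC_dims h.choose_spec

theorem exists_rowCat_of_mem_langOf_col2 {z : Mode} {y w : ℕ} {W : Arr σ}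
    (hW : W ∈ langOf σ z (col2 y w)) : ∃ f : ℕ → Arr σ, rowCat (f y) (f w) = some W := by
  cases z with
  | h =>
    obtain ⟨g, hg, rfl⟩ := hW
    refine ⟨fun x => g (unit x), ?_⟩
    rw [← hg.2, rowCat_unit_unit, Option.map_some]
  | p =>
    obtain ⟨s, hs, -⟩ := hW
    exact ⟨s, (subCR_col2 s y w).symm.trans hs⟩
  | r =>
    obtain ⟨s, hs⟩ := hW
    exact ⟨s, (subCR_col2 s y w).symm.trans hs⟩
  | c =>
    obtain ⟨s, hs⟩ := hW
    exact ⟨s, (subRC_col2 s y w).symm.trans hs⟩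
  | rc =>
    rcases hW with ⟨s, hs⟩ | ⟨s, hs⟩
    · exact ⟨s, (subCR_col2 s y w).symm.trans hs⟩
    · exact ⟨s, (subRC_col2 s y w).symm.trans hs⟩

theorem eq_of_rowCat_eq_some_of_mem_langOf_col2 {z : Mode} {y : ℕ} {P Q W : Arr σ}
    (hW : W ∈ langOf σ z (col2 y y)) (h : rowCat P Q = some W) (hr : P.rows = Q.rows) :
    P = Q := by
  obtain ⟨f, hf⟩ := exists_rowCat_of_mem_langOf_col2 hW
  have := (rowCat_dims hf).1
  have := (rowCat_dims h).1
  obtain ⟨hP, hQ⟩ := rowCat_inj hf h (by omega)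
  exact hP.symm.trans hQ

end Languages

section Closures

variable {σ : Type}

theorem subset_rowStar (L : Set (Arr σ)) : L ⊆ rowStar L :=
  fun U hU => ⟨[U], List.cons_ne_nil _ _, by simpa using hU, rfl⟩

theorem rowCat_mem_rowStar {L : Set (Arr σ)} {U V W : Arr σ} (hU : U ∈ L) (hV : V ∈ L)
    (h : rowCat U V = some W) : W ∈ rowStar L :=
  ⟨[U, V], List.cons_ne_nil _ _, by simp [hU, hV], h⟩

theorem mem_of_mem_rowStar_of_rows_lt {L : Set (Arr σ)} {k : ℕ} (hL : ∀ U ∈ L, k ≤ U.rows)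
    {W : Arr σ} (hW : W ∈ rowStar L) (hk : W.rows < 2 * k) : W ∈ L := by
  obtain ⟨l, hne, hmem, hcat⟩ := hW
  rcases l with _ | ⟨U, _ | ⟨V, r⟩⟩
  · exact absurd rfl hne
  · cases hcat
    exact hmem W (List.mem_singleton_self W)
  · obtain ⟨l, hl, hrows, -⟩ := catListO_eq_some rowCat_dims hcat
    rw [← List.map_injective_iff.mpr (Option.some_injective _) hl] at hrows
    have := hL U (hmem U (by simp))
    have := hL V (hmem V (by simp))
    simp only [List.map_cons, List.sum_cons] at hrows
    omega

theorem colStar_eq (L : Set (Arr σ)) : colStar L = transpose ⁻¹' rowStar (transpose ⁻¹' L) := by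
  have hmap : ∀ l : List (Arr σ),
      (l.map transpose).map some = (l.map some).map (Option.map transpose) := by
    simp
  ext W
  constructor
  · rintro ⟨l, hne, hmem, hcat⟩
    refine ⟨l.map transpose, by simpa using hne, by simpa using hmem, ?_⟩
    rw [hmap, catListO_map rowCat_transpose, hcat, Option.map_some]
  · rintro ⟨l, hne, hmem, hcat⟩
    refine ⟨l.map transpose, by simpa using hne, by simpa using hmem, ?_⟩
    rw [hmap, catListO_map colCat_transpose, hcat, Option.map_some, transpose_transpose]

theorem rowStar_langOf_col2_ne {a b : σ} (hab : a ≠ b) (z : Mode) (γ : Arr ℕ) :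
    rowStar (langOf σ z (col2 0 0)) ≠ langOf σ z γ := by
  intro heq
  set L := langOf σ z (col2 0 0)
  have hL : ∀ U ∈ L, 2 ≤ U.rows := fun U hU => (langOf_dims hU).1
  set K := fun x : σ => relabel (fun _ => x) (col2 0 0)
  have hK : ∀ x, K x ∈ L := fun x => relabel_mem_langOf z _ _
  obtain ⟨hγr, hγc⟩ : γ.rows ≤ 2 ∧ γ.cols ≤ 1 := langOf_dims (heq ▸ subset_rowStar L (hK a))
  have hγ : relabel (fun _ => a) γ ∈ L :=
    mem_of_mem_rowStar_of_rows_lt hL (heq ▸ relabel_mem_langOf z _ γ) (by simp [relabel]; omega)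
  have hγr' : 2 ≤ γ.rows := hL _ hγ
  obtain ⟨y, w, rfl⟩ := exists_eq_col2 (γ := γ) (by omega) (by have := γ.cols_pos; omega)
  by_cases hyw : y = w
  · subst hyw
    obtain ⟨D, hD⟩ : ∃ D, rowCat (K a) (K b) = some D := ⟨_, dif_pos rfl⟩
    have hKab := eq_of_rowCat_eq_some_of_mem_langOf_col2
      (heq ▸ rowCat_mem_rowStar (hK a) (hK b) hD) hD rfl
    exact hab (entry_eq_of_eq hKab (0 : Fin 2) (0 : Fin 1))
  · set c : ℕ → σ := fun x => if x = y then a else b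
    have hE : relabel c (col2 y w) ∈ L :=
      mem_of_mem_rowStar_of_rows_lt hL (heq ▸ relabel_mem_langOf z c _) (by simp [relabel, col2])
    have hcut : rowCat (relabel c (unit y)) (relabel c (unit w)) = some (relabel c (col2 y w)) := by
      rw [rowCat_relabel, rowCat_unit_unit, Option.map_some]
    have hcyw := entry_eq_of_eq (eq_of_rowCat_eq_some_of_mem_langOf_col2 hE hcut rfl)
      (0 : Fin 1) (0 : Fin 1)
    simp only [relabel, unit, c, if_neg (Ne.symm hyw)] at hcyw
    exact hab hcyw

theorem colStar_langOf_transpose_col2_ne {a b : σ} (hab : a ≠ b) (z : Mode) (γ : Arr ℕ) :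
    colStar (langOf σ z (col2 0 0)ᵀ) ≠ langOf σ z γ := by
  intro heq
  have hstar : colStar (langOf σ z (col2 0 0)ᵀ) =
      transpose ⁻¹' rowStar (langOf σ z.transpose (col2 0 0)) := by
    rw [colStar_eq, langOf_transpose]
    rfl
  refine rowStar_langOf_col2_ne hab z.transpose γᵀ
    (Set.preimage_injective.mpr transpose_involutive.surjective ?_)
  rw [← hstar, heq, ← langOf_transpose, transpose_transpose]

end Closures

/-- over a non-unary alphabet, none of the array pattern
language classes is closed under row or under column concatenation closure. -/
theorem stmt18 {σ : Type} [Fintype σ] (hcard : 2 ≤ Fintype.card σ) (z : Mode) :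
    ∃ α α' : Arr ℕ,
      (∀ γ : Arr ℕ, rowStar (langOf σ z α) ≠ langOf σ z γ) ∧
      (∀ γ : Arr ℕ, colStar (langOf σ z α') ≠ langOf σ z γ) := by
  obtain ⟨a, b, hab⟩ := Fintype.exists_pair_of_one_lt_card hcard
  exact ⟨col2 0 0, (col2 0 0)ᵀ, rowStar_langOf_col2_ne hab z,
    colStar_langOf_transpose_col2_ne hab z⟩
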